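/- arXiv:2003.03051 — 2 statements merged into one kernel-verified Lean document; each statement's English description precedes it below -/
import Mathlib

section
/- Let ψ ∈ (0,1) and let a, â be vectors in the probability simplex of ℝ^{m+1}. Suppose c ∈ [0,1) satisfies the fixed-point equation c = ψ‖(1−c)·a − â‖₁. Then (ψ/(1+ψ))·‖a − â‖₁ ≤ c ≤ (ψ/(1−ψ))·‖a − â‖₁. -/
theorem cost_proportion_bounds (m : ℕ) (ψ : ℝ) (hψ : ψ ∈ Set.Ioo (0:ℝ) 1)
    (a ahat : Fin (m+1) → ℝ)
    (ha0 : ∀ i, 0 ≤ a i) (ha1 : ∑ i, a i = 1)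
    (hb0 : ∀ i, 0 ≤ ahat i) (hb1 : ∑ i, ahat i = 1)
    (c : ℝ) (hc : c ∈ Set.Ico (0:ℝ) 1)
    (hfix : c = ψ * ∑ i, |(1 - c) * a i - ahat i|) :
    (ψ / (1 + ψ)) * (∑ i, |a i - ahat i|) ≤ c ∧
      c ≤ (ψ / (1 - ψ)) * (∑ i, |a i - ahat i|) := by
  obtain ⟨hψ0, hψ1⟩ := hψ
  obtain ⟨hc0, hc1⟩ := hc
  set N := ∑ i, |a i - ahat i| with hN
  set M := ∑ i, |(1 - c) * a i - ahat i| with hM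
  have hlow : N - c ≤ M := by
    have : ∀ i ∈ Finset.univ, |a i - ahat i| - c * a i ≤ |(1 - c) * a i - ahat i| := by
      intro i _
      have h1 : (1 - c) * a i - ahat i = (a i - ahat i) - c * a i := by ring
      rw [h1]
      have := abs_sub_abs_le_abs_sub (a i - ahat i) (c * a i)
      have hca : |c * a i| = c * a i := abs_of_nonneg (mul_nonneg hc0 (ha0 i))
      linarith [abs_sub (a i - ahat i) (c * a i), this, hca]
    have hs := Finset.sum_le_sum this
    rw [Finset.sum_sub_distrib, ← Finset.mul_sum, ha1, mul_one] at hs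
    exact hs
  have hhigh : M ≤ N + c := by
    have : ∀ i ∈ Finset.univ, |(1 - c) * a i - ahat i| ≤ |a i - ahat i| + c * a i := by
      intro i _
      have h1 : (1 - c) * a i - ahat i = (a i - ahat i) + (-(c * a i)) := by ring
      rw [h1]
      have := abs_add_le (a i - ahat i) (-(c * a i))
      have hca : |-(c * a i)| = c * a i := by
        rw [abs_neg]; exact abs_of_nonneg (mul_nonneg hc0 (ha0 i))
      linarith
    have hs := Finset.sum_le_sum this
    rw [Finset.sum_add_distrib, ← Finset.mul_sum, ha1, mul_one] at hs
    exact hs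
  constructor
  · rw [div_mul_eq_mul_div, div_le_iff₀ (by linarith)]
    nlinarith
  · rw [div_mul_eq_mul_div, le_div_iff₀ (by linarith)]
    nlinarith
end

section
/- Let ψ ∈ (0,1) and let a, â be in the probability simplex of ℝ^{m+1}. If c ∈ [0,1) satisfies c = ψ‖(1−c)·a − â‖₁ and a ≠ â, then ‖a − â‖₁ ≤ 2(1−ψ)/(1+ψ) implies c ≤ 2ψ/(1+ψ) < 1. -/
/-! Removing the proportion `c` of the portfolio `a` moves it by at most `c` in ℓ¹, so the fixed-point
equation gives `c ≤ ψ (‖a - â‖₁ + c)`, i.e. `c (1 - ψ) ≤ ψ ‖a - â‖₁`; the volume bound then turns this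
into `c ≤ 2ψ / (1 + ψ)`. -/

open Finset

theorem sum_abs_one_sub_mul_sub_le {ι : Type*} (s : Finset ι) (a b : ι → ℝ) (c : ℝ) :
    ∑ i ∈ s, |(1 - c) * a i - b i| ≤ ∑ i ∈ s, |a i - b i| + |c| * ∑ i ∈ s, |a i| := by
  calc ∑ i ∈ s, |(1 - c) * a i - b i| = ∑ i ∈ s, |(a i - b i) - c * a i| := by
        simp only [sub_mul, one_mul, sub_right_comm]
    _ ≤ ∑ i ∈ s, (|a i - b i| + |c| * |a i|) :=
        sum_le_sum fun i _ => (abs_sub _ _).trans_eq (by rw [abs_mul])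
    _ = ∑ i ∈ s, |a i - b i| + |c| * ∑ i ∈ s, |a i| := by rw [sum_add_distrib, mul_sum]

theorem mul_one_sub_le_of_eq_mul {c ψ S V : ℝ} (hψ : 0 ≤ ψ) (hfix : c = ψ * S) (hS : S ≤ V + c) :
    c * (1 - ψ) ≤ ψ * V := by
  have : c ≤ ψ * (V + c) := hfix.trans_le (mul_le_mul_of_nonneg_left hS hψ)
  linarith

theorem cost_proportion_away_from_one_general (m : ℕ) (ψ : ℝ) (hψ : ψ ∈ Set.Ioo (0:ℝ) 1)
    (a ahat : Fin (m+1) → ℝ)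
    (ha0 : ∀ i, 0 ≤ a i) (ha1 : ∑ i, a i = 1)
    (c : ℝ)
    (hfix : c = ψ * ∑ i, |(1 - c) * a i - ahat i|)
    (hvol : ∑ i, |a i - ahat i| ≤ 2 * (1 - ψ) / (1 + ψ)) :
    c ≤ 2 * ψ / (1 + ψ) ∧ 2 * ψ / (1 + ψ) < 1 := by
  obtain ⟨hψ0, hψ1⟩ := hψ
  have hc0 : 0 ≤ c := hfix ▸ mul_nonneg hψ0.le (sum_nonneg fun i _ => abs_nonneg _)
  have hsum : ∑ i, |(1 - c) * a i - ahat i| ≤ ∑ i, |a i - ahat i| + c := by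
    have h := sum_abs_one_sub_mul_sub_le univ a ahat c
    rwa [abs_of_nonneg hc0, sum_congr rfl fun i _ => abs_of_nonneg (ha0 i), ha1, mul_one] at h
  have hcψ : c * (1 - ψ) ≤ 2 * ψ / (1 + ψ) * (1 - ψ) :=
    calc c * (1 - ψ) ≤ ψ * ∑ i, |a i - ahat i| := mul_one_sub_le_of_eq_mul hψ0.le hfix hsum
      _ ≤ ψ * (2 * (1 - ψ) / (1 + ψ)) := mul_le_mul_of_nonneg_left hvol hψ0.le
      _ = 2 * ψ / (1 + ψ) * (1 - ψ) := by ring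
  refine ⟨le_of_mul_le_mul_right hcψ (by linarith), ?_⟩
  rw [div_lt_one (by linarith)]
  linarith

theorem cost_proportion_away_from_one (m : ℕ) (ψ : ℝ) (hψ : ψ ∈ Set.Ioo (0:ℝ) 1)
    (a ahat : Fin (m+1) → ℝ)
    (ha0 : ∀ i, 0 ≤ a i) (ha1 : ∑ i, a i = 1)
    (hb0 : ∀ i, 0 ≤ ahat i) (hb1 : ∑ i, ahat i = 1)
    (c : ℝ) (hc : c ∈ Set.Ico (0:ℝ) 1)
    (hfix : c = ψ * ∑ i, |(1 - c) * a i - ahat i|)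
    (hne : a ≠ ahat)
    (hvol : ∑ i, |a i - ahat i| ≤ 2 * (1 - ψ) / (1 + ψ)) :
    c ≤ 2 * ψ / (1 + ψ) ∧ 2 * ψ / (1 + ψ) < 1 :=
  cost_proportion_away_from_one_general m ψ hψ a ahat ha0 ha1 c hfix hvol
end
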